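/- Let A be a separable C*-algebra, B a C*-algebra, and φ = (φ_t)_{t∈[1,∞)} : A → B an asymptotic homomorphism. Then there exists a nondecreasing sequence 1 ≤ t_1 ≤ t_2 ≤ t_3 ≤ ⋯ in [1,∞) with lim_{i→∞} t_i = ∞ such that for every a ∈ A, lim_{i→∞} sup_{t ∈ [t_i, t_{i+1}]} ‖φ_t(a) − φ_{t_i}(a)‖ = 0. -/

import Mathlib

open Filter Set

/-!
An asymptotic homomorphism is asymptotically bounded. For `‖b‖ < 1` and `a = b⋆b`, functional
calculus gives a self-adjoint `v` with `a (1 + v²) = v²`. Applying `φ_t`, `z = φ_t(a)` satisfies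
`z (1 + V²) ≈ V²` with `V = φ_t(v)` nearly self-adjoint, and `1 + V² = (1 + iV)(1 - iV)` has a
right inverse of norm at most `2`; so `‖φ_t(a)‖ ≤ 5`, hence `‖φ_t(b)‖ ≤ 3` by the C⋆-identity,
eventually. Therefore `φ` is asymptotically equicontinuous, and it suffices to discretize the
countably many continuous paths `t ↦ φ_t(d_j)` along a dense sequence `(d_j)`. Stepping from `x`
to `x + δ_⌊x⌋`, where `δ_n` is a common modulus of uniform continuity of the first `n` paths on
`[1, n + 2]`, does this: the steps shrink only as `x` grows, so the sequence still tends to `∞`.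
-/

def IsAsymptoticHom {A B : Type*} [NonUnitalNormedRing A] [StarRing A] [Module ℂ A]
    [NonUnitalNormedRing B] [StarRing B] [Module ℂ B] (φ : ℝ → A → B) : Prop :=
  (∀ a : A, ContinuousOn (fun t => φ t a) (Ici 1)) ∧
  (∀ a : A, Tendsto (fun t => ‖φ t (star a) - star (φ t a)‖) atTop (nhds 0)) ∧
  (∀ (a b : A) (c : ℂ),
    Tendsto (fun t => ‖φ t (c • a + b) - c • φ t a - φ t b‖) atTop (nhds 0)) ∧
  (∀ a b : A, Tendsto (fun t => ‖φ t (a * b) - φ t a * φ t b‖) atTop (nhds 0))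

section Unital

variable {U : Type*} [CStarAlgebra U] [PartialOrder U] [StarOrderedRing U]

lemma exists_units_norm_inv_le_of_algebraMap_le {S : U} {r : ℝ} (hr : 0 < r)
    (hS : algebraMap ℝ U r ≤ S) : ∃ S' : Uˣ, (S' : U) = S ∧ ‖(↑S'⁻¹ : U)‖ ≤ r⁻¹ := by
  let R : Uˣ := Units.map (algebraMap ℝ U : ℝ →* U) (Units.mk0 r hr.ne')
  have hR : (0 : U) ≤ R := algebraMap_nonneg U hr.le
  have hRS : (R : U) ≤ S := hS
  obtain ⟨S', rfl⟩ : IsUnit S :=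
    CStarAlgebra.isUnit_of_le (R : U) hRS (Units.isStrictlyPositive_iff.mpr hR)
  refine ⟨S', rfl, ?_⟩
  rw [CStarAlgebra.norm_le_iff_le_algebraMap _ (inv_nonneg.mpr hr.le)
    (CFC.inv_nonneg_of_nonneg S' (hR.trans hRS))]
  exact CStarAlgebra.inv_le_inv hR hRS

lemma exists_mul_eq_one_of_algebraMap_le_mul_star {X : U} {r : ℝ} (hr : 0 < r)
    (hX : algebraMap ℝ U r ≤ X * star X) : ∃ R : U, X * R = 1 ∧ ‖R‖ ^ 2 ≤ r⁻¹ := by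
  obtain ⟨S, hS, hSn⟩ := exists_units_norm_inv_le_of_algebraMap_le hr hX
  refine ⟨star X * ↑S⁻¹, by rw [← mul_assoc, ← hS, S.mul_inv], ?_⟩
  have : star (star X * ↑S⁻¹) * (star X * ↑S⁻¹) = star (↑S⁻¹ : U) := by
    rw [star_mul, star_star, mul_assoc, ← mul_assoc X, ← hS, S.mul_inv, mul_one]
  rw [sq, ← CStarRing.norm_star_mul_self, this, norm_star]
  exact hSn

lemma algebraMap_one_sub_norm_le_one_add_add {P T : U} (hP : 0 ≤ P) (hT : IsSelfAdjoint T) :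
    algebraMap ℝ U (1 - ‖T‖) ≤ 1 + P + T := by
  have := hT.neg_algebraMap_norm_le_self
  rw [map_sub, map_one]
  calc 1 - algebraMap ℝ U ‖T‖ = 1 + 0 + -algebraMap ℝ U ‖T‖ := by abel
    _ ≤ 1 + P + T := by gcongr

end Unital

lemma exists_one_add_I_smul_mul_eq_one {U : Type*} [CStarAlgebra U] {V : U}
    (hV : ‖V - star V‖ ≤ 1 / 2) :
    ∃ R : U, (1 + Complex.I • V) * R = 1 ∧ ‖R‖ ^ 2 ≤ 2 := by
  let _ := CStarAlgebra.spectralOrder U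
  have := CStarAlgebra.spectralOrderedRing U
  set T := Complex.I • (V - star V)
  have hT : IsSelfAdjoint T := by
    simp [T, IsSelfAdjoint, star_smul, smul_sub, neg_add_eq_sub]
  have hTn : ‖T‖ ≤ 1 / 2 := by simpa [T, norm_smul] using hV
  have hX : (1 + Complex.I • V) * star (1 + Complex.I • V) = 1 + V * star V + T := by
    simp only [T, star_add, star_one, star_smul, Complex.star_def, Complex.conj_I, add_mul,
      mul_add, one_mul, mul_one, smul_mul_smul_comm, mul_neg, Complex.I_mul_I, neg_neg, one_smul]
    module
  have hle : algebraMap ℝ U (1 / 2) ≤ (1 + Complex.I • V) * star (1 + Complex.I • V) :=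
    hX ▸ (algebraMap_mono U (by linarith)).trans
      (algebraMap_one_sub_norm_le_one_add_add (mul_star_self_nonneg V) hT)
  obtain ⟨R, hR, hRn⟩ := exists_mul_eq_one_of_algebraMap_le_mul_star (by norm_num) hle
  exact ⟨R, hR, by simpa using hRn⟩

lemma exists_one_add_mul_self_mul_eq_one {U : Type*} [CStarAlgebra U] {V : U}
    (hV : ‖V - star V‖ ≤ 1 / 2) : ∃ Q : U, (1 + V * V) * Q = 1 ∧ ‖Q‖ ≤ 2 := by
  obtain ⟨R₁, hR₁, hR₁n⟩ := exists_one_add_I_smul_mul_eq_one hV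
  obtain ⟨R₂, hR₂, hR₂n⟩ := exists_one_add_I_smul_mul_eq_one (V := -V)
    (by rwa [star_neg, sub_neg_eq_add, neg_add_eq_sub, norm_sub_rev])
  have hfactor : 1 + V * V = (1 + Complex.I • V) * (1 + Complex.I • -V) := by
    simp only [mul_add, add_mul, mul_one, one_mul, smul_mul_smul_comm, Complex.I_mul_I,
      mul_neg, neg_smul, one_smul, smul_neg]
    abel
  refine ⟨R₂ * R₁, by rw [hfactor, mul_assoc, ← mul_assoc _ R₂, hR₂, one_mul, hR₁], ?_⟩
  have := norm_mul_le R₂ R₁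
  nlinarith [norm_nonneg R₁, norm_nonneg R₂, mul_nonneg (norm_nonneg R₁) (norm_nonneg R₂)]

lemma norm_le_five_of_approx {B : Type*} [NonUnitalCStarAlgebra B] {z w V : B}
    (hz : ‖z + z * w - w‖ ≤ 1 / 4) (hw : ‖w - V * V‖ ≤ 1 / 8) (hV : ‖V - star V‖ ≤ 1 / 2) :
    ‖z‖ ≤ 5 := by
  obtain ⟨Q, hQ, hQn⟩ := exists_one_add_mul_self_mul_eq_one (U := Unitization ℂ B)
    (V := V) (by rwa [← Unitization.inr_star, ← Unitization.inr_sub, Unitization.norm_inr])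
  -- `z (1 + V²) = ρ + V²` and `V² Q = 1 - Q`, so `z = 1 - Q + ρ Q`
  set ρ : B := z + z * w - w + (w - V * V) - z * (w - V * V)
  have hρ : ‖ρ‖ ≤ 3 / 8 + ‖z‖ / 8 := by
    calc ‖ρ‖ ≤ ‖z + z * w - w‖ + ‖w - V * V‖ + ‖z‖ * ‖w - V * V‖ :=
          (norm_sub_le _ _).trans (add_le_add (norm_add_le _ _) (norm_mul_le _ _))
      _ ≤ 1 / 4 + 1 / 8 + ‖z‖ * (1 / 8) := by gcongr
      _ = 3 / 8 + ‖z‖ / 8 := by ring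
  have hz_eq : (z : Unitization ℂ B) = 1 - Q + ρ * Q := by
    calc (z : Unitization ℂ B) = z * ((1 + V * V) * Q) := by rw [hQ, mul_one]
      _ = (ρ - 1 + (1 + V * V)) * Q := by
          rw [← mul_assoc]
          congr 1
          simp only [ρ, Unitization.inr_add, Unitization.inr_sub, Unitization.inr_mul]
          noncomm_ring
      _ = 1 - Q + ρ * Q := by rw [add_mul, hQ]; noncomm_ring
  have : ‖z‖ ≤ 3 + (3 / 8 + ‖z‖ / 8) * 2 := by
    calc ‖z‖ = ‖1 - Q + ρ * Q‖ := by rw [← hz_eq, Unitization.norm_inr]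
      _ ≤ ‖(1 : Unitization ℂ B)‖ + ‖Q‖ + ‖ρ‖ * ‖Q‖ := by
          refine (norm_add_le _ _).trans (add_le_add (norm_sub_le _ _) ?_)
          simpa only [Unitization.norm_inr] using norm_mul_le (ρ : Unitization ℂ B) Q
      _ ≤ 1 + 2 + (3 / 8 + ‖z‖ / 8) * 2 := by
          gcongr
          exact norm_one.le
      _ = _ := by ring
  linarith

lemma exists_isSelfAdjoint_mul_mul_self_eq {A : Type*} [NonUnitalCStarAlgebra A] {b : A}
    (hb : ‖b‖ < 1) : ∃ v : A, IsSelfAdjoint v ∧ star b * b * (v * v) = v * v - star b * b := by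
  set a := star b * b
  have hspec : ∀ x ∈ quasispectrum ℝ a, 0 ≤ x ∧ x < 1 := by
    intro x hx
    rw [Unitization.quasispectrum_eq_spectrum_inr' ℝ ℂ, Unitization.inr_mul,
      Unitization.inr_star] at hx
    refine ⟨spectrum_star_mul_self_nonneg x hx, ?_⟩
    have hx_le := spectrum.norm_le_norm_of_mem hx
    rw [CStarRing.norm_star_mul_self, Unitization.norm_inr, Real.norm_eq_abs] at hx_le
    nlinarith [le_abs_self x, norm_nonneg b]
  set g : ℝ → ℝ := fun x => √(x / (1 - x))
  have hg : ContinuousOn g (quasispectrum ℝ a) :=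
    (continuousOn_id.div (continuousOn_const.sub continuousOn_id)
      fun x hx => (sub_pos.2 (hspec x hx).2).ne').sqrt
  have hg0 : g 0 = 0 := by simp [g]
  have hgg : ContinuousOn (fun x => g x * g x) (quasispectrum ℝ a) := hg.mul hg
  have key : cfcₙ (fun x => x * (g x * g x)) a = cfcₙ (fun x => g x * g x - x) a := by
    refine cfcₙ_congr fun x hx => ?_
    obtain ⟨h0, h1⟩ := hspec x hx
    have h1' : 1 - x ≠ 0 := (sub_pos.2 h1).ne'
    simp only [g, Real.mul_self_sqrt (div_nonneg h0 (sub_pos.2 h1).le)]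
    field_simp
    ring
  refine ⟨cfcₙ g a, cfcₙ_predicate g a, ?_⟩
  rwa [cfcₙ_mul (fun x : ℝ => x) _ a continuousOn_id rfl hgg (by simp [hg0]),
    cfcₙ_sub _ _ a hgg (by simp [hg0]), cfcₙ_id' ℝ a, cfcₙ_mul _ _ a hg hg0 hg hg0] at key

def AsymptoticallyEquicontinuous {X Y : Type*} [PseudoMetricSpace X] [PseudoMetricSpace Y]
    (ψ : ℝ → X → Y) : Prop :=
  ∀ ε > 0, ∃ δ > 0, ∀ x y, dist x y < δ → ∀ᶠ s in atTop, dist (ψ s x) (ψ s y) ≤ ε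

def Discretizes {Y : Type*} [PseudoMetricSpace Y] (t : ℕ → ℝ) (f : ℝ → Y) : Prop :=
  ∀ ε > 0, ∀ᶠ i in atTop, ∀ s ∈ Icc (t i) (t (i + 1)), dist (f s) (f (t i)) ≤ ε

section Discretization

variable {Y : Type*} [PseudoMetricSpace Y]

lemma Discretizes.tendsto_sSup {t : ℕ → ℝ} {f : ℝ → Y} (h : Discretizes t f) :
    Tendsto (fun i => sSup ((fun s => dist (f s) (f (t i))) '' Icc (t i) (t (i + 1))))
      atTop (nhds 0) := by
  refine tendsto_order.2 ⟨fun ε hε => Eventually.of_forall fun i => hε.trans_le ?_,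
    fun ε hε => (h (ε / 2) (by positivity)).mono fun i hi => ?_⟩
  · exact Real.sSup_nonneg (forall_mem_image.2 fun s _ => dist_nonneg)
  · exact (Real.sSup_le (forall_mem_image.2 hi) (by positivity)).trans_lt (by linarith)

lemma Discretizes.of_denseRange {X ι : Type*} [PseudoMetricSpace X] {ψ : ℝ → X → Y}
    (hψ : AsymptoticallyEquicontinuous ψ) {d : ι → X} (hd : DenseRange d) {t : ℕ → ℝ}
    (ht : Tendsto t atTop atTop) (hdt : ∀ j, Discretizes t (fun s => ψ s (d j))) (x : X) :
    Discretizes t (fun s => ψ s x) := by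
  intro ε hε
  obtain ⟨δ, hδ, hψδ⟩ := hψ (ε / 3) (by positivity)
  obtain ⟨j, hj⟩ := hd.exists_dist_lt x hδ
  obtain ⟨T, hT⟩ := eventually_atTop.1 (hψδ x (d j) hj)
  filter_upwards [ht.eventually_ge_atTop T, hdt j (ε / 3) (by positivity)] with i hTi hi s hs
  calc dist (ψ s x) (ψ (t i) x)
      ≤ dist (ψ s x) (ψ s (d j)) + dist (ψ s (d j)) (ψ (t i) (d j))
          + dist (ψ (t i) (d j)) (ψ (t i) x) := dist_triangle4 _ _ _ _
    _ ≤ ε / 3 + ε / 3 + ε / 3 := by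
        gcongr
        exacts [hT s (hTi.trans hs.1), hi s hs, dist_comm (ψ (t i) x) _ ▸ hT (t i) hTi]
    _ = ε := by ring

lemma tendsto_iterate_add_atTop {g : ℝ → ℝ} (hg : Antitone g) (hg0 : ∀ x, 0 < g x) (x₀ : ℝ) :
    Tendsto (fun i => (fun x => x + g x)^[i] x₀) atTop atTop := by
  set t := fun i => (fun x => x + g x)^[i] x₀
  have ht_succ : ∀ i, t (i + 1) = t i + g (t i) := fun i => Function.iterate_succ_apply' _ i x₀
  refine tendsto_atTop_atTop_of_monotone
    (monotone_nat_of_le_succ fun i => by linarith [ht_succ i, hg0 (t i)]) fun b => ?_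
  by_contra! hlt
  have hlin : ∀ i : ℕ, x₀ + i * g b ≤ t i := by
    intro i
    induction i with
    | zero => simp [t]
    | succ i ih =>
      rw [ht_succ]; push_cast
      linarith [hg (hlt i).le]
  obtain ⟨n, hn⟩ := exists_nat_gt ((b - x₀) / g b)
  have := (div_lt_iff₀ (hg0 b)).1 hn
  linarith [hlin n, hlt n]

lemma exists_antitone_uniform_modulus (f : ℕ → ℝ → Y) (hf : ∀ j, ContinuousOn (f j) (Ici 1)) :
    ∃ δ : ℕ → ℝ, Antitone δ ∧ (∀ n, 0 < δ n ∧ δ n ≤ 1) ∧ ∀ n j : ℕ, j ≤ n →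
      ∀ s ∈ Icc (1 : ℝ) (n + 2), ∀ s' ∈ Icc (1 : ℝ) (n + 2),
        dist s s' ≤ δ n → dist (f j s) (f j s') ≤ 1 / (n + 1) := by
  have hmod : ∀ n j : ℕ, ∃ η > 0, η ≤ 1 ∧ ∀ s ∈ Icc (1 : ℝ) (n + 2), ∀ s' ∈ Icc (1 : ℝ) (n + 2),
      dist s s' ≤ η → dist (f j s) (f j s') ≤ 1 / (n + 1) := by
    intro n j
    obtain ⟨η, hη, hηf⟩ := Metric.uniformContinuousOn_iff_le.1
      (isCompact_Icc.uniformContinuousOn_of_continuous ((hf j).mono fun s hs => hs.1))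
      (1 / (n + 1)) (by positivity)
    exact ⟨min η 1, by positivity, min_le_right _ _,
      fun s hs s' hs' hss' => hηf s hs s' hs' (hss'.trans (min_le_left _ _))⟩
  choose η hη hη1 hηf using hmod
  -- minimizing over all `m ≤ n` as well, not just over `j ≤ n`, makes `δ` antitone
  have hne : ∀ n, (Finset.range (n + 1) ×ˢ Finset.range (n + 1)).Nonempty := fun n => by simp
  refine ⟨fun n => (Finset.range (n + 1) ×ˢ Finset.range (n + 1)).inf' (hne n)
    (fun p => η p.1 p.2), fun m n hmn => Finset.inf'_mono _ ?_ _, fun n => ⟨?_, ?_⟩,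
    fun n j hj s hs s' hs' hss' => hηf n j s hs s' hs' (hss'.trans ?_)⟩
  · exact Finset.product_subset_product (Finset.range_subset_range.2 (by omega))
      (Finset.range_subset_range.2 (by omega))
  · exact (Finset.lt_inf'_iff _).2 fun p _ => hη p.1 p.2
  · exact (Finset.inf'_le _ (by simp : (n, 0) ∈ _)).trans (hη1 n 0)
  · exact Finset.inf'_le _
      (by simp only [Finset.mem_product, Finset.mem_range]; omega : (n, j) ∈ _)

theorem exists_discretizes (f : ℕ → ℝ → Y) (hf : ∀ j, ContinuousOn (f j) (Ici 1)) :
    ∃ t : ℕ → ℝ, (∀ i, 1 ≤ t i) ∧ Monotone t ∧ Tendsto t atTop atTop ∧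
      ∀ j, Discretizes t (f j) := by
  obtain ⟨δ, hδ_anti, hδ, hδf⟩ := exists_antitone_uniform_modulus f hf
  set t := fun i => (fun x => x + δ ⌊x⌋₊)^[i] 1
  have ht_succ : ∀ i, t (i + 1) = t i + δ ⌊t i⌋₊ := fun i => Function.iterate_succ_apply' _ i 1
  have ht_mono : Monotone t :=
    monotone_nat_of_le_succ fun i => by linarith [ht_succ i, (hδ ⌊t i⌋₊).1]
  have ht_top : Tendsto t atTop atTop :=
    tendsto_iterate_add_atTop (hδ_anti.comp_monotone Nat.floor_mono) (fun x => (hδ _).1) 1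
  refine ⟨t, fun i => ht_mono (Nat.zero_le i), ht_mono, ht_top, fun j ε hε => ?_⟩
  obtain ⟨n₀, hn₀⟩ := exists_nat_one_div_lt hε
  filter_upwards [ht_top.eventually_ge_atTop (max j n₀ : ℕ)] with i hi s hs
  set n := ⌊t i⌋₊
  have hn : max j n₀ ≤ n := Nat.le_floor hi
  have hti : t i < n + 1 := Nat.lt_floor_add_one _
  have h1 : 1 ≤ t i := ht_mono (Nat.zero_le i)
  have hs' : s ≤ t i + δ n := ht_succ i ▸ hs.2
  have hs_mem : s ∈ Icc (1 : ℝ) (n + 2) := ⟨h1.trans hs.1, by linarith [(hδ n).2]⟩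
  have hdist : dist s (t i) ≤ δ n := by
    rw [Real.dist_eq, abs_of_nonneg (by linarith [hs.1])]
    linarith
  calc dist (f j s) (f j (t i))
      ≤ 1 / (n + 1) := hδf n j (le_of_max_le_left hn) s hs_mem (t i) ⟨h1, by linarith⟩ hdist
    _ ≤ 1 / (n₀ + 1) := by gcongr; exact_mod_cast le_of_max_le_right hn
    _ ≤ ε := hn₀.le

end Discretization

namespace IsAsymptoticHom

section Linear

variable {A B : Type*} [NonUnitalNormedRing A] [StarRing A] [Module ℂ A]
  [NonUnitalNormedRing B] [StarRing B] [Module ℂ B] {φ : ℝ → A → B}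

lemma tendsto_apply_smul_add_sub (hφ : IsAsymptoticHom φ) (a b : A) (c : ℂ) :
    Tendsto (fun t => φ t (c • a + b) - c • φ t a - φ t b) atTop (nhds 0) :=
  tendsto_zero_iff_norm_tendsto_zero.2 (hφ.2.2.1 a b c)

lemma tendsto_apply_zero (hφ : IsAsymptoticHom φ) : Tendsto (fun t => φ t 0) atTop (nhds 0) := by
  simpa using (hφ.tendsto_apply_smul_add_sub 0 0 1).neg

lemma tendsto_norm_apply_smul_sub (hφ : IsAsymptoticHom φ) (c : ℂ) (a : A) :
    Tendsto (fun t => ‖φ t (c • a) - c • φ t a‖) atTop (nhds 0) := by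
  refine tendsto_zero_iff_norm_tendsto_zero.1 ?_
  simpa using (hφ.tendsto_apply_smul_add_sub a 0 c).add hφ.tendsto_apply_zero

lemma tendsto_norm_apply_sub_sub (hφ : IsAsymptoticHom φ) (a b : A) :
    Tendsto (fun t => ‖φ t (a - b) - (φ t a - φ t b)‖) atTop (nhds 0) := by
  refine tendsto_zero_iff_norm_tendsto_zero.1 ?_
  convert hφ.tendsto_apply_smul_add_sub b a (-1) using 2 with t
  rw [neg_one_smul, neg_one_smul, neg_add_eq_sub]
  abel

end Linear

variable {A B : Type*} [NonUnitalCStarAlgebra A] [NonUnitalCStarAlgebra B] {φ : ℝ → A → B}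

lemma eventually_norm_apply_star_mul_self_le (hφ : IsAsymptoticHom φ) {b : A} (hb : ‖b‖ < 1) :
    ∀ᶠ t in atTop, ‖φ t (star b * b)‖ ≤ 5 := by
  obtain ⟨v, hv, hbv⟩ := exists_isSelfAdjoint_mul_mul_self_eq hb
  have hφ_star := hφ.2.1
  have hφ_mul := hφ.2.2.2
  filter_upwards [(hφ_mul (star b * b) (v * v)).eventually_lt_const (by norm_num : (0 : ℝ) < 1 / 8),
    (hφ.tendsto_norm_apply_sub_sub (v * v) (star b * b)).eventually_lt_const
      (by norm_num : (0 : ℝ) < 1 / 8),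
    (hφ_mul v v).eventually_lt_const (by norm_num : (0 : ℝ) < 1 / 8),
    (hφ_star v).eventually_lt_const (by norm_num : (0 : ℝ) < 1 / 2)] with t hmul hsub hsq hstar
  rw [hv.star_eq] at hstar
  refine norm_le_five_of_approx (w := φ t (v * v)) (V := φ t v) ?_ hsq.le hstar.le
  set z := φ t (star b * b)
  calc ‖z + z * φ t (v * v) - φ t (v * v)‖
      = ‖(φ t (v * v - star b * b) - (φ t (v * v) - z))
          - (φ t (star b * b * (v * v)) - z * φ t (v * v))‖ := by
        rw [hbv]; congr 1; abel
    _ ≤ 1 / 8 + 1 / 8 := (norm_sub_le _ _).trans (add_le_add hsub.le hmul.le)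
    _ = 1 / 4 := by norm_num

lemma eventually_norm_apply_le_three (hφ : IsAsymptoticHom φ) {b : A} (hb : ‖b‖ < 1) :
    ∀ᶠ t in atTop, ‖φ t b‖ ≤ 3 := by
  have hφ_star := hφ.2.1
  have hφ_mul := hφ.2.2.2
  filter_upwards [hφ.eventually_norm_apply_star_mul_self_le hb,
    (hφ_mul (star b) b).eventually_lt_const one_pos,
    (hφ_star b).eventually_lt_const one_pos] with t hsq hmul hstar
  set x := φ t b
  have : ‖x‖ * ‖x‖ ≤ 6 + ‖x‖ := calc
    ‖x‖ * ‖x‖ = ‖star x * x‖ := CStarRing.norm_star_mul_self.symm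
    _ = ‖φ t (star b * b) - (φ t (star b * b) - φ t (star b) * x)
          - (φ t (star b) - star x) * x‖ := by congr 1; noncomm_ring
    _ ≤ ‖φ t (star b * b)‖ + ‖φ t (star b * b) - φ t (star b) * x‖
          + ‖φ t (star b) - star x‖ * ‖x‖ :=
        (norm_sub_le _ _).trans (add_le_add (norm_sub_le _ _) (norm_mul_le _ _))
    _ ≤ 5 + 1 + 1 * ‖x‖ := by gcongr
    _ = 6 + ‖x‖ := by ring
  nlinarith [norm_nonneg x]

lemma eventually_norm_apply_le (hφ : IsAsymptoticHom φ) {b : A} {r : ℝ} (hb : ‖b‖ < r) :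
    ∀ᶠ t in atTop, ‖φ t b‖ ≤ 4 * r := by
  have hr : 0 < r := (norm_nonneg b).trans_lt hb
  have hnorm : ∀ x : B, ‖(r : ℂ) • x‖ = r * ‖x‖ := fun x => by
    rw [norm_smul, Complex.norm_of_nonneg hr.le]
  have hb' : ‖(r : ℂ)⁻¹ • b‖ < 1 := by
    rw [norm_smul, norm_inv, Complex.norm_of_nonneg hr.le, inv_mul_lt_one₀ hr]
    exact hb
  have hrb : (r : ℂ) • (r : ℂ)⁻¹ • b = b := smul_inv_smul₀ (by exact_mod_cast hr.ne') b
  filter_upwards [hφ.eventually_norm_apply_le_three hb',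
    (hφ.tendsto_norm_apply_smul_sub (r : ℂ) ((r : ℂ)⁻¹ • b)).eventually_lt_const hr]
    with t h3 hsmul
  rw [hrb] at hsmul
  calc ‖φ t b‖ ≤ ‖(r : ℂ) • φ t ((r : ℂ)⁻¹ • b)‖ + ‖φ t b - (r : ℂ) • φ t ((r : ℂ)⁻¹ • b)‖ :=
        norm_le_norm_add_norm_sub' _ _
    _ ≤ r * 3 + r := by rw [hnorm]; gcongr
    _ = 4 * r := by ring

lemma asymptoticallyEquicontinuous (hφ : IsAsymptoticHom φ) : AsymptoticallyEquicontinuous φ := by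
  intro ε hε
  refine ⟨ε / 5, by positivity, fun a d had => ?_⟩
  rw [dist_eq_norm] at had
  filter_upwards [hφ.eventually_norm_apply_le had,
    (hφ.tendsto_norm_apply_sub_sub a d).eventually_lt_const (by positivity : 0 < ε / 5)]
    with t hle hsub
  rw [dist_eq_norm]
  calc ‖φ t a - φ t d‖ ≤ ‖φ t (a - d)‖ + ‖φ t a - φ t d - φ t (a - d)‖ :=
        norm_le_norm_add_norm_sub' _ _
    _ ≤ 4 * (ε / 5) + ε / 5 := by rw [norm_sub_rev] at hsub; gcongr
    _ = ε := by ring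

end IsAsymptoticHom

theorem stmt_3 {A B : Type*} [NonUnitalCStarAlgebra A] [TopologicalSpace.SeparableSpace A]
    [NonUnitalCStarAlgebra B] (φ : ℝ → A → B) (hφ : IsAsymptoticHom φ) :
    ∃ t : ℕ → ℝ, (∀ i, 1 ≤ t i) ∧ Monotone t ∧ Tendsto t atTop atTop ∧
      ∀ a : A,
        Tendsto (fun i => sSup ((fun s => ‖φ s a - φ (t i) a‖) '' Icc (t i) (t (i + 1))))
          atTop (nhds 0) := by
  have : Nonempty A := ⟨0⟩
  obtain ⟨d, hd⟩ := TopologicalSpace.exists_dense_seq A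
  obtain ⟨t, ht_one, ht_mono, ht_top, hdt⟩ :=
    exists_discretizes (fun j s => φ s (d j)) fun j => hφ.1 (d j)
  refine ⟨t, ht_one, ht_mono, ht_top, fun a => ?_⟩
  simpa only [dist_eq_norm] using
    (Discretizes.of_denseRange hφ.asymptoticallyEquicontinuous hd ht_top hdt a).tendsto_sSup
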